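/- arXiv:1111.2121 — 3 statements merged into one kernel-verified Lean document; each statement's English description precedes it below -/
import Mathlib

section
/- Let n = 2k and let f be a symmetric Boolean function on n variables. If AI(f) = k, then the Hamming weight of the simplified value vector v_f ∈ F₂^{n+1} is k or k+1. -/
open scoped Classical

/-- Hamming weight of a Boolean vector. -/
def wtv {n : ℕ} (x : Fin n → ZMod 2) : ℕ := (Finset.univ.filter (fun i => x i = 1)).card

/-- A Boolean function is symmetric if invariant under permutations of inputs. -/
def SymmF {n : ℕ} (f : (Fin n → ZMod 2) → ZMod 2) : Prop :=
  ∀ σ : Equiv.Perm (Fin n), ∀ x, f (x ∘ σ) = f x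

/-- The algebraic degree of a Boolean function: the least `d` such that `f` is
represented by a polynomial of total degree at most `d`. -/
noncomputable def funcDeg {n : ℕ} (f : (Fin n → ZMod 2) → ZMod 2) : ℕ :=
  sInf {d | ∃ P : MvPolynomial (Fin n) (ZMod 2), P.totalDegree ≤ d ∧
    ∀ x, MvPolynomial.eval x P = f x}

/-- Algebraic immunity: the minimal degree of a nonzero annihilator of `f` or `f+1`. -/
noncomputable def AI {n : ℕ} (f : (Fin n → ZMod 2) → ZMod 2) : ℕ :=
  sInf {d | ∃ g : (Fin n → ZMod 2) → ZMod 2, g ≠ 0 ∧ funcDeg g = d ∧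
    (f * g = 0 ∨ (f + 1) * g = 0)}

/-!
Over `𝔽₂` the elementary symmetric polynomial `e_i` takes the value `(wt x).choose i` at `x`, so
for `c ∈ 𝔽₂^{m+1}` the symmetric function `x ↦ ∑ cᵢ (wt x).choose i` has degree at most `m`.
Since the matrix `(t.choose i)_{t,i ≤ m}` is unitriangular, this function is nonzero as soon as
`c` is. Asking it to vanish on the set `T` of weights where `f = 1` imposes `|T|` linear
conditions on `m + 1` unknowns, so `AI f ≤ |T|`; applied to `f + 1`, `AI f ≤ n + 1 - |T|`.
With `n = 2k` and `AI f = k` this leaves `|T| ∈ {k, k + 1}`.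
-/

open Finset MvPolynomial

theorem MvPolynomial.isHomogeneous_esymm (σ R : Type*) [CommSemiring R] [Fintype σ] (i : ℕ) :
    (esymm σ R i).IsHomogeneous i :=
  IsHomogeneous.sum _ _ _ fun S hS => by
    simpa [(mem_powersetCard.mp hS).2] using
      IsHomogeneous.prod S (fun s => (X s : MvPolynomial σ R)) (fun _ => 1)
        fun s _ => isHomogeneous_X R s

theorem ZMod.eq_zero_iff_ne_one_mod_two : ∀ a : ZMod 2, a = 0 ↔ a ≠ 1 := by decide

theorem ZMod.ite_eq_one_mod_two : ∀ a : ZMod 2, (if a = 1 then 1 else 0) = a := by decide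

theorem wtv_le {n : ℕ} (x : Fin n → ZMod 2) : wtv x ≤ n :=
  (card_filter_le _ _).trans_eq (card_fin n)

theorem exists_wtv_eq {n j : ℕ} (h : j ≤ n) : ∃ x : Fin n → ZMod 2, wtv x = j := by
  refine ⟨fun t => if (t : ℕ) < j then 1 else 0, ?_⟩
  have : ∀ t : Fin n, ((if (t : ℕ) < j then 1 else 0 : ZMod 2) = 1 ↔ (t : ℕ) < j) := by
    intro t; split_ifs with ht <;> simp [ht]
  simp only [wtv, this, Fin.card_filter_val_lt, min_eq_right h]

theorem eval_esymm_eq_choose_wtv {n : ℕ} (i : ℕ) (x : Fin n → ZMod 2) :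
    eval x (esymm (Fin n) (ZMod 2) i) = ((wtv x).choose i : ZMod 2) := by
  have hprod : ∀ S : Finset (Fin n),
      ∏ s ∈ S, x s = if S ⊆ ({t | x t = 1} : Finset (Fin n)) then 1 else 0 := by
    intro S
    rw [← prod_congr rfl fun s _ => ZMod.ite_eq_one_mod_two (x s), prod_boole]
    simp [subset_iff]
  simp only [esymm, map_sum, map_prod, eval_X, hprod, sum_boole, wtv, ← card_powersetCard]
  congr 2
  ext S
  simp [mem_powersetCard, and_comm]

def binomialSum {R : Type*} [Semiring R] {m : ℕ} (c : Fin (m + 1) → R) (t : ℕ) : R :=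
  ∑ i : Fin (m + 1), (t.choose i : R) * c i

theorem eq_zero_of_forall_binomialSum_eq_zero {R : Type*} [Semiring R] {m : ℕ}
    {c : Fin (m + 1) → R} (h : ∀ j : Fin (m + 1), binomialSum c j = 0) : c = 0 := by
  funext j
  induction j using WellFoundedLT.induction with
  | _ j ih =>
    rw [Pi.zero_apply, ← h j, binomialSum, sum_eq_single j]
    · simp
    · intro i _ hij
      rcases hij.lt_or_gt with hlt | hgt
      · simp [ih i hlt]
      · simp [Nat.choose_eq_zero_of_lt (show (j : ℕ) < i from hgt)]
    · simp

theorem exists_ne_zero_forall_binomialSum_eq_zero {K : Type*} [Field K] {m : ℕ}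
    (T : Finset ℕ) (hT : #T ≤ m) :
    ∃ c : Fin (m + 1) → K, c ≠ 0 ∧ ∀ t ∈ T, binomialSum c t = 0 := by
  let M : Matrix T (Fin (m + 1)) K := Matrix.of fun t i => ((t : ℕ).choose i : K)
  have hker : LinearMap.ker M.mulVecLin ≠ ⊥ :=
    LinearMap.ker_ne_bot_of_finrank_lt (by simp; omega)
  obtain ⟨c, hc, hc0⟩ := (Submodule.ne_bot_iff _).mp hker
  refine ⟨c, hc0, fun t ht => ?_⟩
  simpa [M, Matrix.mulVec, dotProduct, binomialSum] using congrFun hc ⟨t, ht⟩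

theorem funcDeg_binomialSum_wtv_le {n m : ℕ} (c : Fin (m + 1) → ZMod 2) :
    funcDeg (fun x : Fin n → ZMod 2 => binomialSum c (wtv x)) ≤ m := by
  refine Nat.sInf_le ⟨∑ i, C (c i) * esymm (Fin n) (ZMod 2) i, ?_, fun x => ?_⟩
  · refine totalDegree_finsetSum_le fun i _ => ?_
    exact (((isHomogeneous_esymm _ _ i).C_mul _).totalDegree_le).trans (Nat.lt_succ_iff.mp i.2)
  · simp [binomialSum, eval_esymm_eq_choose_wtv, mul_comm]

theorem AI_le_funcDeg {n : ℕ} {f g : (Fin n → ZMod 2) → ZMod 2} (hg : g ≠ 0)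
    (h : f * g = 0 ∨ (f + 1) * g = 0) : AI f ≤ funcDeg g :=
  Nat.sInf_le ⟨g, hg, rfl, h⟩

theorem AI_add_one {n : ℕ} (f : (Fin n → ZMod 2) → ZMod 2) : AI (f + 1) = AI f := by
  have : f + 1 + 1 = f := by
    funext x
    simp only [Pi.add_apply, Pi.one_apply, add_assoc]
    generalize f x = a
    revert a; decide
  simp only [AI, this, or_comm]

theorem AI_le_card_support {n : ℕ} {f : (Fin n → ZMod 2) → ZMod 2} {w : ℕ → ZMod 2}
    (hf : ∀ x, f x = w (wtv x)) (hT : #{i ∈ range (n + 1) | w i = 1} ≤ n) :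
    AI f ≤ #{i ∈ range (n + 1) | w i = 1} := by
  set T := {i ∈ range (n + 1) | w i = 1}
  obtain ⟨c, hc0, hcT⟩ := exists_ne_zero_forall_binomialSum_eq_zero (K := ZMod 2) T le_rfl
  set g := fun x : Fin n → ZMod 2 => binomialSum c (wtv x)
  have hg0 : g ≠ 0 := by
    intro hg
    refine hc0 (eq_zero_of_forall_binomialSum_eq_zero fun j => ?_)
    obtain ⟨x, hx⟩ := exists_wtv_eq ((Nat.lt_succ_iff.mp j.2).trans hT)
    simpa [g, hx] using congrFun hg x
  have hann : f * g = 0 := by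
    funext x
    by_cases hx : f x = 1
    · have : wtv x ∈ T := by simp [T, Nat.lt_succ_iff.mpr (wtv_le x), ← hf, hx]
      simp [g, hcT _ this]
    · simp [(ZMod.eq_zero_iff_ne_one_mod_two (f x)).mpr hx]
  exact (AI_le_funcDeg hg0 (.inl hann)).trans (funcDeg_binomialSum_wtv_le c)

theorem card_filter_add_one_eq_one {α : Type*} (s : Finset α) (v : α → ZMod 2) :
    #{i ∈ s | v i + 1 = 1} = #s - #{i ∈ s | v i = 1} := by
  rw [← card_filter_add_card_filter_not (s := s) (fun i => v i = 1), add_tsub_cancel_left]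
  simp only [add_eq_right, ZMod.eq_zero_iff_ne_one_mod_two, ne_eq]

theorem stmt6_general (k : ℕ) {n : ℕ} (hn : n = 2 * k)
    (f : (Fin n → ZMod 2) → ZMod 2)
    (v : ℕ → ZMod 2) (hv : ∀ x, f x = v (wtv x))
    (hAI : AI f = k) :
    ((Finset.range (n+1)).filter (fun i => v i = 1)).card = k ∨
    ((Finset.range (n+1)).filter (fun i => v i = 1)).card = k + 1 := by
  have hcard : #{i ∈ range (n + 1) | v i = 1} ≤ n + 1 :=
    (card_filter_le _ _).trans_eq (card_range _)
  have hk_le_card : k ≤ #{i ∈ range (n + 1) | v i = 1} := by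
    by_contra! h
    have := AI_le_card_support hv (by omega)
    omega
  have hcard_le : #{i ∈ range (n + 1) | v i = 1} ≤ k + 1 := by
    by_contra! h
    have hcard_compl := card_filter_add_one_eq_one (range (n + 1)) v
    rw [card_range] at hcard_compl
    have := AI_le_card_support (f := f + 1) (w := fun i => v i + 1)
      (fun x => by simp [hv]) (by omega)
    rw [AI_add_one] at this
    omega
  omega

theorem stmt6 (k : ℕ) {n : ℕ} (hn : n = 2 * k)
    (f : (Fin n → ZMod 2) → ZMod 2) (hf : SymmF f)
    (v : ℕ → ZMod 2) (hv : ∀ x, f x = v (wtv x))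
    (hAI : AI f = k) :
    ((Finset.range (n+1)).filter (fun i => v i = 1)).card = k ∨
    ((Finset.range (n+1)).filter (fun i => v i = 1)).card = k + 1 :=
  stmt6_general k hn f v hv hAI
end

section
/- Let n ≥ 2 and f a symmetric Boolean function on n variables. If there exists a nonzero Boolean function g on n variables with fg = 0, then there exist an integer b with 0 ≤ b ≤ ⌊n/2⌋ and a nonzero symmetric Boolean function h in the variables x_{2b+1},…,x_n with deg(h) ≤ deg(g) − b, such that f·h·P_b = 0, where P_b = (x₁+x₂)(x₃+x₄)⋯(x_{2b−1}+x_{2b}). -/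
open scoped Classical

/-!
Induction on the number `b` of pairs already split off. Let `g ≠ 0` depend only on the
coordinates from `2b` on, with `f · P_b · g = 0`. If `g` is symmetric in those coordinates we are
done. Otherwise some transposition `τ = (a c)` of them moves `g`; since `f` and `P_b` are
`τ`-invariant, `g + g ∘ τ` is again a nonzero annihilator, and it vanishes on `x_a = x_c`. Hence
`g + g ∘ τ = (x_a + x_c) · g₁` with `g₁` free of `x_a, x_c` and of degree at most `deg g - 1`, as
one reads off the algebraic normal form (its coefficients are `∑_{T ⊆ S} g(1_T)`). Relabelling
`a, c` as `2b, 2b + 1` turns `g₁` into an annihilator of `f · P_{b+1}`.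
-/

open Finset MvPolynomial

abbrev BoolFun (σ : Type*) := (σ → ZMod 2) → ZMod 2

section ANF

variable {σ : Type*}

lemma exists_eq_indicator_one [Fintype σ] (x : σ → ZMod 2) :
    ∃ U : Finset σ, x = (U : Set σ).indicator 1 := by
  refine ⟨univ.filter (x · ≠ 0), funext fun i => ?_⟩
  by_cases hi : x i = 0
  · simp [hi]
  · have h1 : x i = 1 := (by decide : ∀ u : ZMod 2, u ≠ 0 → u = 1) _ hi
    simp [h1]

noncomputable def anf (g : BoolFun σ) (S : Finset σ) : ZMod 2 :=
  ∑ T ∈ S.powerset, g ((T : Set σ).indicator 1)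

lemma anf_add (g h : BoolFun σ) (S : Finset σ) : anf (g + h) S = anf g S + anf h S :=
  sum_add_distrib

lemma cast_card_Icc_finset_zmod_two (A S : Finset σ) :
    ((Icc A S).card : ZMod 2) = if A = S then 1 else 0 := by
  by_cases hAS : A ⊆ S
  · rw [card_Icc_finset hAS]
    rcases hAS.eq_or_ssubset with rfl | hlt
    · simp
    · obtain ⟨k, hk⟩ := Nat.exists_eq_add_of_lt (card_lt_card hlt)
      rw [hk, if_neg hlt.ne, add_assoc, Nat.add_sub_cancel_left, pow_succ, Nat.cast_mul]
      exact mul_eq_zero_of_right _ rfl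
  · rw [Icc_eq_empty hAS, if_neg (by rintro rfl; exact hAS subset_rfl)]
    simp

lemma sum_powerset_anf (g : BoolFun σ) (U : Finset σ) :
    ∑ S ∈ U.powerset, anf g S = g ((U : Set σ).indicator 1) := by
  simp only [anf]
  rw [sum_comm' (t' := U.powerset) (s' := fun T => Icc T U) (fun S T => by
    simp only [mem_powerset, mem_Icc]; constructor <;> intro h <;> tauto)]
  simp only [sum_const, nsmul_eq_mul, cast_card_Icc_finset_zmod_two, ite_mul, one_mul, zero_mul]
  simp

lemma prod_indicator_one (S U : Finset σ) :
    ∏ i ∈ S, (U : Set σ).indicator (1 : σ → ZMod 2) i = if S ⊆ U then 1 else 0 := by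
  simp only [Set.indicator_apply, mem_coe, Pi.one_apply]
  exact prod_boole

noncomputable def anfPoly [Fintype σ] (g : BoolFun σ) : MvPolynomial σ (ZMod 2) :=
  ∑ S : Finset σ, C (anf g S) * ∏ i ∈ S, X i

lemma eval_anfPoly [Fintype σ] (g : BoolFun σ) (x : σ → ZMod 2) : eval x (anfPoly g) = g x := by
  obtain ⟨U, rfl⟩ := exists_eq_indicator_one x
  simp only [anfPoly, map_sum, map_mul, eval_C, map_prod, eval_X, prod_indicator_one, mul_ite,
    mul_one, mul_zero]
  rw [← sum_filter, ← sum_powerset_anf g U]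
  congr 1
  ext
  simp

lemma totalDegree_anfPoly_le [Fintype σ] {g : BoolFun σ} {d : ℕ}
    (h : ∀ S : Finset σ, d < #S → anf g S = 0) : (anfPoly g).totalDegree ≤ d := by
  refine totalDegree_finsetSum_le fun S _ => ?_
  by_cases hS : d < #S
  · simp [h S hS]
  · calc _ ≤ 0 + ∑ i ∈ S, (X i : MvPolynomial σ (ZMod 2)).totalDegree :=
          (totalDegree_mul _ _).trans
            (add_le_add (totalDegree_C _).le (totalDegree_finsetProd _ _))
      _ ≤ d := by simpa [totalDegree_X] using hS

lemma card_support_le_sum (d : σ →₀ ℕ) : #d.support ≤ d.sum fun _ e => e := by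
  rw [card_eq_sum_ones]
  exact sum_le_sum fun i hi => Nat.one_le_iff_ne_zero.2 (Finsupp.mem_support_iff.1 hi)

lemma prod_indicator_one_pow (d : σ →₀ ℕ) (T : Finset σ) :
    ∏ i ∈ d.support, (T : Set σ).indicator (1 : σ → ZMod 2) i ^ d i =
      if d.support ⊆ T then 1 else 0 := by
  rw [← prod_indicator_one]
  refine prod_congr rfl fun i hi => ?_
  by_cases hiT : i ∈ T
  · simp [hiT]
  · simp [hiT, Finsupp.mem_support_iff.1 hi]

lemma anf_eval_eq_zero_of_totalDegree_lt (P : MvPolynomial σ (ZMod 2)) {S : Finset σ}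
    (hS : P.totalDegree < #S) : anf (fun x => eval x P) S = 0 := by
  simp only [anf, eval_eq, prod_indicator_one_pow]
  rw [sum_comm]
  refine sum_eq_zero fun d hd => ?_
  have hdS : d.support ≠ S := by
    rintro rfl
    exact (card_support_le_sum d |>.trans (le_totalDegree hd)).not_gt hS
  rw [← mul_sum, sum_boole, ← Icc_eq_filter_powerset, cast_card_Icc_finset_zmod_two, if_neg hdS,
    mul_zero]

end ANF

section Degree

variable {n : ℕ}

lemma exists_totalDegree_le_funcDeg (g : BoolFun (Fin n)) :
    ∃ P : MvPolynomial (Fin n) (ZMod 2), P.totalDegree ≤ funcDeg g ∧ ∀ x, eval x P = g x :=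
  Nat.sInf_mem (s := {d | ∃ P : MvPolynomial (Fin n) (ZMod 2), P.totalDegree ≤ d ∧
    ∀ x, eval x P = g x}) ⟨_, anfPoly g, le_rfl, eval_anfPoly g⟩

theorem funcDeg_le_iff {g : BoolFun (Fin n)} {d : ℕ} :
    funcDeg g ≤ d ↔ ∀ S : Finset (Fin n), d < #S → anf g S = 0 := by
  refine ⟨fun hd S hS => ?_,
    fun h => Nat.sInf_le ⟨anfPoly g, totalDegree_anfPoly_le h, eval_anfPoly g⟩⟩
  obtain ⟨P, hP, hPg⟩ := exists_totalDegree_le_funcDeg g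
  rw [show g = fun x => eval x P from funext fun x => (hPg x).symm]
  exact anf_eval_eq_zero_of_totalDegree_lt P (by omega)

lemma anf_eq_zero_of_funcDeg_lt {g : BoolFun (Fin n)} {S : Finset (Fin n)}
    (hS : funcDeg g < #S) : anf g S = 0 :=
  funcDeg_le_iff.1 le_rfl S hS

lemma funcDeg_add_le (g h : BoolFun (Fin n)) :
    funcDeg (g + h) ≤ max (funcDeg g) (funcDeg h) :=
  funcDeg_le_iff.2 fun S hS => by
    rw [anf_add, anf_eq_zero_of_funcDeg_lt (by omega), anf_eq_zero_of_funcDeg_lt (by omega),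
      add_zero]

lemma funcDeg_comp_perm_le (g : BoolFun (Fin n)) (π : Equiv.Perm (Fin n)) :
    funcDeg (fun x => g (x ∘ π)) ≤ funcDeg g := by
  obtain ⟨P, hP, hPg⟩ := exists_totalDegree_le_funcDeg g
  exact Nat.sInf_le ⟨rename π P, (totalDegree_rename_le _ _).trans hP,
    fun x => by rw [eval_rename, hPg]⟩

end Degree

section Cofactor

variable {σ : Type*} [DecidableEq σ]

lemma anf_eq_zero_of_dependsOn {g : BoolFun σ} {s : Set σ} (hg : DependsOn g s)
    {S : Finset σ} {j : σ} (hjS : j ∈ S) (hjs : j ∉ s) : anf g S = 0 := by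
  rw [anf, ← insert_erase hjS, sum_powerset_insert (notMem_erase j S), ← sum_add_distrib]
  refine sum_eq_zero fun T _ => ?_
  rw [hg (x := ((insert j T : Finset σ) : Set σ).indicator 1) (y := (T : Set σ).indicator 1)
    fun i hi => ?_, CharTwo.add_self_eq_zero]
  have hij : i ≠ j := by rintro rfl; exact hjs hi
  simp [Set.indicator_apply, hij]

noncomputable def pairCofactor (g : BoolFun σ) (a c : σ) : BoolFun σ :=
  fun x => g (Function.update (Function.update x a 0) c 1)

lemma dependsOn_pairCofactor {g : BoolFun σ} {s : Set σ} (hg : DependsOn g s) (a c : σ) :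
    DependsOn (pairCofactor g a c) (s \ {a, c}) := by
  intro x y hxy
  refine hg fun i hi => ?_
  simp only [Function.update_apply]
  split_ifs with hic hia
  · rfl
  · rfl
  · exact hxy i ⟨hi, by simp [hia, hic]⟩

lemma eq_mul_pairCofactor {g : BoolFun σ} {a c : σ} (hvan : ∀ x, x a = x c → g x = 0)
    (hsymm : ∀ x, g (x ∘ Equiv.swap a c) = g x) (x : σ → ZMod 2) :
    g x = (x a + x c) * pairCofactor g a c x := by
  obtain hx | hx := eq_or_ne (x a) (x c)
  · rw [hvan x hx, hx, CharTwo.add_self_eq_zero, zero_mul]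
  have hfix : ∀ y : σ → ZMod 2, y a = 0 → y c = 1 → pairCofactor g a c y = g y := by
    intro y ha hc
    rw [pairCofactor, ← ha, ← hc, Function.update_eq_self, Function.update_eq_self]
  have hx' : (x a = 0 ∧ x c = 1) ∨ (x a = 1 ∧ x c = 0) := by
    revert hx; generalize x a = u; generalize x c = v; revert u v; decide
  obtain ⟨ha, hc⟩ | ⟨ha, hc⟩ := hx'
  · rw [hfix x ha hc, ha, hc, zero_add, one_mul]
  · have hagree : ∀ i ∈ (Set.univ \ {a, c} : Set σ), (x ∘ Equiv.swap a c) i = x i := by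
      intro i hi
      simp only [Set.mem_sdiff, Set.mem_insert_iff, Set.mem_singleton_iff, not_or] at hi
      simp [Equiv.swap_apply_of_ne_of_ne hi.2.1 hi.2.2]
    rw [← dependsOn_pairCofactor (dependsOn_univ g) a c hagree,
      hfix _ (by simp [hc]) (by simp [ha]), hsymm, ha, hc, add_zero, one_mul]

lemma anf_pairCofactor {g : BoolFun σ} {a c : σ} (hac : a ≠ c)
    (hvan : ∀ x, x a = x c → g x = 0) {S : Finset σ} (ha : a ∉ S) (hc : c ∉ S) :
    anf (pairCofactor g a c) S = anf g (insert c S) := by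
  rw [anf, anf, sum_powerset_insert hc, sum_eq_zero fun T hT => hvan _ ?_, zero_add]
  · refine sum_congr rfl fun T hT => congrArg g (funext fun i => ?_)
    have haT : a ∉ T := fun h => ha (mem_powerset.1 hT h)
    by_cases hic : i = c
    · simp [hic]
    · by_cases hia : i = a
      · simp [hia, hac, haT]
      · simp [hia, hic, Set.indicator_apply]
  · have haT : a ∉ T := fun h => ha (mem_powerset.1 hT h)
    have hcT : c ∉ T := fun h => hc (mem_powerset.1 hT h)
    simp [haT, hcT]

end Cofactor

lemma funcDeg_pairCofactor_le {n : ℕ} {g : BoolFun (Fin n)} {a c : Fin n} (hac : a ≠ c)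
    (hvan : ∀ x, x a = x c → g x = 0) : funcDeg (pairCofactor g a c) ≤ funcDeg g - 1 := by
  refine funcDeg_le_iff.2 fun S hS => ?_
  have hdep := dependsOn_pairCofactor (dependsOn_univ g) a c
  by_cases ha : a ∈ S
  · exact anf_eq_zero_of_dependsOn hdep ha (by simp)
  by_cases hc : c ∈ S
  · exact anf_eq_zero_of_dependsOn hdep hc (by simp)
  rw [anf_pairCofactor hac hvan ha hc]
  exact anf_eq_zero_of_funcDeg_lt (by rw [card_insert_of_notMem hc]; omega)

lemma comp_perm_eq_of_comp_swap_eq {α β γ : Type*} [Finite α] [DecidableEq α] {p : α → Prop}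
    {g : (α → β) → γ} (hg : ∀ a c, p a → p c → ∀ x, g (x ∘ Equiv.swap a c) = g x)
    {π : Equiv.Perm α} (hπ : ∀ i, ¬ p i → π i = i) (x : α → β) : g (x ∘ π) = g x := by
  let H : Subgroup (Equiv.Perm α) :=
    { carrier := {π | ∀ x, g (x ∘ π) = g x}
      mul_mem' := fun {π₁ π₂} h₁ h₂ x => by
        rw [Equiv.Perm.coe_mul, ← Function.comp_assoc, h₂, h₁]
      one_mem' := fun x => rfl
      inv_mem' := fun {π} h x => by
        rw [← h (x ∘ ⇑π⁻¹), Function.comp_assoc, ← Equiv.Perm.coe_mul, inv_mul_cancel,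
          Equiv.Perm.coe_one, Function.comp_id] }
  let S : Set (Equiv.Perm α) := {τ | ∃ a c, p a ∧ p c ∧ a ≠ c ∧ τ = Equiv.swap a c}
  have hS : ∀ τ ∈ S, τ.IsSwap := fun τ ⟨a, c, _, _, hac, hτ⟩ => ⟨a, c, hac, hτ⟩
  have hSH : Subgroup.closure S ≤ H :=
    (Subgroup.closure_le H).2 fun τ ⟨a, c, ha, hc, _, hτ⟩ => hτ ▸ hg a c ha hc
  refine hSH ((mem_closure_isSwap hS).2 ⟨Set.toFinite _, fun i => ?_⟩) x
  by_cases hi : π i = i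
  · rw [hi]; exact MulAction.mem_orbit_self i
  have hpi : p i := by by_contra h; exact hi (hπ i h)
  have hpπi : p (π i) := by by_contra h; exact hi (π.injective (hπ _ h))
  exact ⟨⟨_, Subgroup.subset_closure ⟨i, π i, hpi, hpπi, Ne.symm hi, rfl⟩⟩,
    Equiv.swap_apply_left i (π i)⟩

section PairProduct

variable {n : ℕ}

/-- The paper's `P_b`, with coordinates indexed from `0`. -/
def pairProd (b : ℕ) (hb : 2 * b ≤ n) (x : Fin n → ZMod 2) : ZMod 2 :=
  ∏ i : Fin b, (x ⟨2 * i, by omega⟩ + x ⟨2 * i + 1, by omega⟩)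

lemma pairProd_zero (hb : 2 * 0 ≤ n) : pairProd 0 hb = 1 :=
  funext fun _ => Fin.prod_univ_zero _

lemma pairProd_comp_perm {b : ℕ} (hb : 2 * b ≤ n) {π : Equiv.Perm (Fin n)}
    (hπ : ∀ i : Fin n, i.val < 2 * b → π i = i) (x : Fin n → ZMod 2) :
    pairProd b hb (x ∘ π) = pairProd b hb x := by
  refine prod_congr rfl fun i _ => ?_
  simp only [Function.comp_apply]
  rw [hπ _ (by simp), hπ _ (by simp; omega)]

lemma pairProd_succ {b : ℕ} (hb : 2 * (b + 1) ≤ n) (x : Fin n → ZMod 2) :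
    pairProd (b + 1) hb x =
      pairProd b (by omega) x * (x ⟨2 * b, by omega⟩ + x ⟨2 * b + 1, by omega⟩) :=
  Fin.prod_univ_castSucc _

lemma exists_perm_fixing_lt {m : ℕ} {a c : Fin n} (hac : a ≠ c) (ha : m ≤ a.val)
    (hc : m ≤ c.val) :
    ∃ ρ : Equiv.Perm (Fin n), (∀ i : Fin n, i.val < m → ρ i = i) ∧
      (ρ a).val = m ∧ (ρ c).val = m + 1 := by
  have hm : m + 1 < n := by have := a.isLt; have := c.isLt; have := Fin.val_ne_of_ne hac; omega
  set m₀ : Fin n := ⟨m, by omega⟩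
  set m₁ : Fin n := ⟨m + 1, hm⟩
  set c' := Equiv.swap a m₀ c
  have hc' : m ≤ c'.val := by
    simp only [c', Equiv.swap_apply_def]; split_ifs <;> simp [m₀, ha, hc]
  have hc'm₀ : c' ≠ m₀ := by simp [c', Equiv.swap_apply_eq_iff, hac.symm]
  refine ⟨Equiv.swap c' m₁ * Equiv.swap a m₀, fun i hi => ?_, ?_, ?_⟩
  · have h1 : Equiv.swap a m₀ i = i := Equiv.swap_apply_of_ne_of_ne
      (by rintro rfl; omega) (by rintro rfl; simp [m₀] at hi)
    rw [Equiv.Perm.mul_apply, h1, Equiv.swap_apply_of_ne_of_ne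
      (by rintro rfl; omega) (by rintro rfl; simp [m₁] at hi)]
  · rw [Equiv.Perm.mul_apply, Equiv.swap_apply_left, Equiv.swap_apply_of_ne_of_ne hc'm₀.symm
      (by simp [m₀, m₁, Fin.ext_iff])]
  · rw [Equiv.Perm.mul_apply, Equiv.swap_apply_left]

end PairProduct

section Reduction

variable {n : ℕ}

lemma exists_mul_eq_add_comp_swap {g : BoolFun (Fin n)} {s : Set (Fin n)} (hg : DependsOn g s)
    {a c : Fin n} (ha : a ∈ s) (hc : c ∈ s) {x : Fin n → ZMod 2}
    (hx : g (x ∘ Equiv.swap a c) ≠ g x) :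
    ∃ g₁ : BoolFun (Fin n), g₁ ≠ 0 ∧ DependsOn g₁ (s \ {a, c}) ∧ funcDeg g₁ ≤ funcDeg g - 1 ∧
      ∀ y, (y a + y c) * g₁ y = g y + g (y ∘ Equiv.swap a c) := by
  have hac : a ≠ c := by rintro rfl; simp at hx
  set g' : BoolFun (Fin n) := g + fun y => g (y ∘ Equiv.swap a c)
  have hvan : ∀ y, y a = y c → g' y = 0 := fun y h => by
    have hy : y ∘ Equiv.swap a c = y := by
      rw [Equiv.comp_swap_eq_update, h, Function.update_eq_self, ← h, Function.update_eq_self]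
    simp only [g', Pi.add_apply, hy, CharTwo.add_self_eq_zero]
  have hsymm : ∀ y, g' (y ∘ Equiv.swap a c) = g' y := fun y => by
    have hy : (y ∘ Equiv.swap a c) ∘ Equiv.swap a c = y := funext fun i => by simp
    simp only [g', Pi.add_apply, hy]
    exact add_comm _ _
  have hfac := eq_mul_pairCofactor hvan hsymm
  refine ⟨pairCofactor g' a c, fun h => hx ?_, dependsOn_pairCofactor ?_ a c, ?_,
    fun y => (hfac y).symm⟩
  · have := hfac x
    rw [h, Pi.zero_apply, mul_zero] at this
    exact (CharTwo.add_eq_zero.1 this).symm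
  · intro y z hyz
    have hswap : ∀ i ∈ s, Equiv.swap a c i ∈ s := fun i hi => by
      rw [Equiv.swap_apply_def]; split_ifs <;> assumption
    simp only [g', Pi.add_apply]
    rw [hg hyz, hg (x := y ∘ _) (y := z ∘ _) fun i hi => hyz _ (hswap i hi)]
  · exact (funcDeg_pairCofactor_le hac hvan).trans (Nat.sub_le_sub_right
      ((funcDeg_add_le _ _).trans (max_le le_rfl (funcDeg_comp_perm_le g _))) 1)

theorem exists_annihilator_succ {f : BoolFun (Fin n)} (hf : SymmF f) {b : ℕ} (hb : 2 * b ≤ n)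
    {g : BoolFun (Fin n)} (hg : DependsOn g {i : Fin n | 2 * b ≤ i.val})
    (hann : f * pairProd b hb * g = 0) {a c : Fin n} (ha : 2 * b ≤ a.val) (hc : 2 * b ≤ c.val)
    {x : Fin n → ZMod 2} (hx : g (x ∘ Equiv.swap a c) ≠ g x) :
    ∃ hb' : 2 * (b + 1) ≤ n, ∃ g₂ : BoolFun (Fin n), g₂ ≠ 0 ∧
      DependsOn g₂ {i : Fin n | 2 * (b + 1) ≤ i.val} ∧ funcDeg g₂ ≤ funcDeg g - 1 ∧
      f * pairProd (b + 1) hb' * g₂ = 0 := by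
  obtain ⟨g₁, hg₁, hdep₁, hdeg₁, hfac⟩ := exists_mul_eq_add_comp_swap hg ha hc hx
  have hac : a ≠ c := by rintro rfl; simp at hx
  obtain ⟨ρ, hρ, hρa, hρc⟩ := exists_perm_fixing_lt hac ha hc
  have hb' : 2 * (b + 1) ≤ n := by have := (ρ c).isLt; omega
  have hτ : ∀ i : Fin n, i.val < 2 * b → Equiv.swap a c i = i := fun i hi =>
    Equiv.swap_apply_of_ne_of_ne (by rintro rfl; omega) (by rintro rfl; omega)
  refine ⟨hb', fun y => g₁ (y ∘ ρ), ?_, ?_, (funcDeg_comp_perm_le g₁ ρ).trans hdeg₁, ?_⟩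
  · obtain ⟨x₁, hx₁⟩ := Function.ne_iff.1 hg₁
    exact Function.ne_iff.2 ⟨x₁ ∘ ρ.symm, by simpa [Function.comp_assoc] using hx₁⟩
  · intro y z hyz
    refine hdep₁ fun i ⟨hi, hiac⟩ => hyz (ρ i) ?_
    simp only [Set.mem_insert_iff, Set.mem_singleton_iff, not_or] at hiac
    simp only [Set.mem_ofPred_eq] at hi ⊢
    have h₁ : ¬ (ρ i).val < 2 * b := fun h => by
      rw [ρ.injective (hρ _ h)] at h; omega
    have h₂ : (ρ i).val ≠ 2 * b := fun h =>
      hiac.1 (ρ.injective (Fin.ext (h.trans hρa.symm)))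
    have h₃ : (ρ i).val ≠ 2 * b + 1 := fun h =>
      hiac.2 (ρ.injective (Fin.ext (h.trans hρc.symm)))
    omega
  · funext y
    have hann' : ∀ z, f z * pairProd b hb z * g z = 0 := fun z => congrFun hann z
    have hya : y ⟨2 * b, by omega⟩ = (y ∘ ρ) a := by simp [← hρa]
    have hyc : y ⟨2 * b + 1, by omega⟩ = (y ∘ ρ) c := by simp [← hρc]
    calc f y * pairProd (b + 1) hb' y * g₁ (y ∘ ρ)
        = f (y ∘ ρ) * pairProd b hb (y ∘ ρ) * (((y ∘ ρ) a + (y ∘ ρ) c) * g₁ (y ∘ ρ)) := by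
          rw [pairProd_succ, hf, pairProd_comp_perm hb hρ, hya, hyc]; ring
      _ = f (y ∘ ρ) * pairProd b hb (y ∘ ρ) * g (y ∘ ρ) +
            f ((y ∘ ρ) ∘ Equiv.swap a c) * pairProd b hb ((y ∘ ρ) ∘ Equiv.swap a c) *
              g ((y ∘ ρ) ∘ Equiv.swap a c) := by
          rw [hfac, hf (Equiv.swap a c), pairProd_comp_perm hb hτ]; ring
      _ = 0 := by rw [hann', hann', add_zero]

end Reduction

theorem exists_symmetric_annihilator {n : ℕ} {f : BoolFun (Fin n)} (hf : SymmF f) (b : ℕ)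
    (hb : 2 * b ≤ n) {g : BoolFun (Fin n)} (hg : g ≠ 0)
    (hdep : DependsOn g {i : Fin n | 2 * b ≤ i.val}) (hann : f * pairProd b hb * g = 0) :
    ∃ b', ∃ hb' : 2 * b' ≤ n, ∃ h : BoolFun (Fin n), h ≠ 0 ∧
      DependsOn h {i : Fin n | 2 * b' ≤ i.val} ∧
      (∀ σ : Equiv.Perm (Fin n), (∀ i : Fin n, i.val < 2 * b' → σ i = i) →
        ∀ x, h (x ∘ σ) = h x) ∧
      b ≤ b' ∧ funcDeg h ≤ funcDeg g - (b' - b) ∧ f * pairProd b' hb' * h = 0 := by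
  by_cases hsymm : ∀ a c : Fin n, 2 * b ≤ a.val → 2 * b ≤ c.val →
      ∀ x, g (x ∘ Equiv.swap a c) = g x
  · refine ⟨b, hb, g, hg, hdep, fun σ hσ => comp_perm_eq_of_comp_swap_eq hsymm
      fun i hi => hσ i (by omega), le_rfl, by simp, hann⟩
  push Not at hsymm
  obtain ⟨a, c, ha, hc, x, hx⟩ := hsymm
  obtain ⟨hb₁, g₁, hg₁, hdep₁, hdeg₁, hann₁⟩ := exists_annihilator_succ hf hb hdep hann ha hc hx
  obtain ⟨b', hb', h, hh, hdep_h, hsymm_h, hbb', hdeg_h, hann_h⟩ :=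
    exists_symmetric_annihilator hf (b + 1) hb₁ hg₁ hdep₁ hann₁
  exact ⟨b', hb', h, hh, hdep_h, hsymm_h, by omega, by omega, hann_h⟩
termination_by n - 2 * b

theorem stmt7 {n : ℕ}
    (f g : (Fin n → ZMod 2) → ZMod 2) (hf : SymmF f)
    (hg : g ≠ 0) (hfg : f * g = 0) :
    ∃ b, ∃ hb : b ≤ n / 2, ∃ h : (Fin n → ZMod 2) → ZMod 2,
      h ≠ 0 ∧
      (∀ x y : Fin n → ZMod 2, (∀ i : Fin n, 2 * b ≤ i.val → x i = y i) → h x = h y) ∧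
      (∀ σ : Equiv.Perm (Fin n), (∀ i : Fin n, i.val < 2 * b → σ i = i) →
        ∀ x, h (x ∘ σ) = h x) ∧
      funcDeg h ≤ funcDeg g - b ∧
      f * h * (fun x => ∏ i : Fin b,
        (x ⟨2 * i.val, by have := i.isLt; omega⟩ +
         x ⟨2 * i.val + 1, by have := i.isLt; omega⟩)) = 0 := by
  have hann : f * pairProd 0 (Nat.zero_le n) * g = 0 := by
    rw [pairProd_zero, mul_one]; exact hfg
  obtain ⟨b, hb, h, hh, hdep, hsymm, -, hdeg, hann⟩ := exists_symmetric_annihilator hf 0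
    (Nat.zero_le n) hg (fun x y hxy => congrArg g (funext fun i => hxy i (Nat.zero_le _))) hann
  refine ⟨b, by omega, h, hh, fun x y hxy => hdep hxy, hsymm, by simpa using hdeg, ?_⟩
  rw [mul_right_comm]
  exact hann
end

section
/- Let k = (k_m,…,k_0)₂ and n = 2k, with ε_j ∈ F₂^k defined by (ε_j)_i = 1 iff i ⪯ j for 0 ≤ i ≤ k−1. For any 0 ≤ p ≤ m+1, Σ_{j ∈ A_p, j ⪯ k} ε_j = Σ_{j ∈ A_p, j ⪯ k} ε_{n−j}, where A_p = {k} if p = 0 and A_p = {ω ∈ {0,…,n} : |ω − k| is an odd multiple of 2^{p−1}} for p ≥ 1, and sums are over F₂. -/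
open scoped Classical

/-- Bitwise domination: every bit of `a` is ≤ the corresponding bit of `b`. -/
def Pre (a b : ℕ) : Prop := ∀ t, a.testBit t = true → b.testBit t = true
/-- The vector `ε_i ∈ F₂^k` whose `j`-th coordinate is `1` iff `j ⪯ i`. -/
noncomputable def eps (k : ℕ) (i : ℕ) : Fin k → ZMod 2 :=
  fun j => if Pre j.val i then 1 else 0
/-- `Aset k i`: for `i = 0` just `{k}`; for `i ≥ 1` the set of `ω ∈ {0,…,2k}`
whose distance to `k` is an odd multiple of `2^(i-1)`. -/
noncomputable def Aset (k i : ℕ) : Finset ℕ :=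
  if i = 0 then {k}
  else (Finset.range (2*k+1)).filter (fun ω => ∃ j, Nat.dist ω k = (2*j+1) * 2^(i-1))

/-! By Lucas's theorem `(ε_j)_i = [i ⪯ j]` is `C(j, i) mod 2`, the coefficient of `X^i` in
`(X + 1)^j` over `F₂`. For `p = b + 1` the admissible `j` are exactly `k - (2^(b+1) e + 2^b)` with
`e ⪯ H := ⌊k / 2^(b+1)⌋` (none if bit `b` of `k` vanishes). Writing `k = 2^(b+1) H + 2^b + L` and
`Y = (X + 1)^(2^(b+1)) = X^(2^(b+1)) + 1`, the two sides become the coefficients of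
`(X + 1)^L ∑_{e ⪯ H} Y^(H-e)` and `(X + 1)^L ∑_{e ⪯ H} Y^(H+1+e)`. In characteristic two
`∑_{e ⪯ H} Y^e = (Y + 1)^H`, so the difference is divisible by `(Y + 1)^(H+1) = X^(2^(b+1) (H+1))`,
whose degree exceeds every coordinate `i < k`. -/

open Finset Polynomial

lemma pre_refl (a : ℕ) : Pre a a := fun _ h => h

lemma pre_zero_right_iff {a : ℕ} : Pre a 0 ↔ a = 0 := by
  refine ⟨fun h => Nat.zero_of_testBit_eq_false fun t => ?_, fun h => h ▸ pre_refl 0⟩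
  simpa using mt (h t)

lemma pre_iff_mod_two_and_div_two {a b : ℕ} :
    Pre a b ↔ (a % 2 = 1 → b % 2 = 1) ∧ Pre (a / 2) (b / 2) := by
  simp only [Pre, Nat.testBit_div_two]
  constructor
  · intro h
    exact ⟨by simpa [Nat.testBit_zero] using h 0, fun t => h (t + 1)⟩
  · rintro ⟨h0, h⟩ (_ | t)
    · simpa [Nat.testBit_zero] using h0
    · exact h t

lemma pre_two_pow_mul_add_iff {s A y : ℕ} (x : ℕ) (hy : y < 2 ^ s) :
    Pre x (2 ^ s * A + y) ↔ Pre (x % 2 ^ s) y ∧ Pre (x / 2 ^ s) A := by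
  simp only [Pre, Nat.testBit_two_pow_mul_add A hy, Nat.testBit_mod_two_pow, Bool.and_eq_true,
    decide_eq_true_eq, Nat.testBit_div_two_pow]
  constructor
  · intro h
    refine ⟨fun t ⟨ht, hx⟩ => by simpa [ht] using h t hx, fun t hx => ?_⟩
    simpa using h (t + s) hx
  · rintro ⟨hlow, hhigh⟩ t hx
    split_ifs with ht
    · exact hlow t ⟨ht, hx⟩
    · exact hhigh (t - s) (by rwa [Nat.sub_add_cancel (not_lt.mp ht)])

lemma pre_two_pow_iff {s x : ℕ} : Pre (2 ^ s) x ↔ x.testBit s := by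
  simp only [Pre, Nat.testBit_two_pow, decide_eq_true_eq]
  exact ⟨fun h => h s rfl, fun h t ht => ht ▸ h⟩

theorem cast_choose_eq_ite_pre (R : Type*) [Ring R] [CharP R 2] (a b : ℕ) :
    (b.choose a : R) = if Pre a b then 1 else 0 := by
  induction b using Nat.strong_induction_on generalizing a with
  | _ b ih =>
    rcases Nat.eq_zero_or_pos b with rfl | hb
    · rcases a with _ | a <;> simp [pre_zero_right_iff]
    have lucas : (b.choose a : R) = (b % 2).choose (a % 2) * (b / 2).choose (a / 2) := by
      exact_mod_cast (CharP.intCast_eq_intCast R 2).mpr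
        (Choose.choose_modEq_choose_mod_mul_choose_div (p := 2))
    rw [lucas, ih (b / 2) (by omega), pre_iff_mod_two_and_div_two (a := a)]
    rcases Nat.mod_two_eq_zero_or_one a with ha | ha <;>
      rcases Nat.mod_two_eq_zero_or_one b with hb | hb <;> simp [ha, hb]

lemma Pre.le {a b : ℕ} (h : Pre a b) : a ≤ b := by
  by_contra! hlt
  simpa [Nat.choose_eq_zero_of_lt hlt, h] using cast_choose_eq_ite_pre (ZMod 2) a b

lemma Pre.sub {a b : ℕ} (h : Pre a b) : Pre (b - a) b := by
  have := cast_choose_eq_ite_pre (ZMod 2) (b - a) b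
  rw [Nat.choose_symm h.le, cast_choose_eq_ite_pre, if_pos h] at this
  by_contra hn
  simp [hn] at this

lemma eps_apply_eq_coeff (k j : ℕ) (i : Fin k) :
    eps k j i = ((X + 1 : (ZMod 2)[X]) ^ j).coeff i := by
  rw [coeff_X_add_one_pow, cast_choose_eq_ite_pre]
  rfl

noncomputable def submasks (H : ℕ) : Finset ℕ := (range (H + 1)).filter (Pre · H)

lemma mem_submasks {e H : ℕ} : e ∈ submasks H ↔ Pre e H := by
  simp only [submasks, mem_filter, mem_range, and_iff_right_iff_imp]
  exact fun h => Nat.lt_succ_of_le h.le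

section CharTwo

variable {R : Type*} [CommRing R] [CharP R 2]

lemma sum_submasks_eq_sum_choose_mul (H : ℕ) (f : ℕ → R) :
    ∑ e ∈ submasks H, f e = ∑ e ∈ range (H + 1), (H.choose e : R) * f e := by
  simp only [submasks, sum_filter, cast_choose_eq_ite_pre, ite_mul, one_mul, zero_mul]

lemma sum_submasks_pow (y : R) (H : ℕ) : ∑ e ∈ submasks H, y ^ e = (y + 1) ^ H := by
  simp [sum_submasks_eq_sum_choose_mul, add_pow, mul_comm]

lemma sum_submasks_pow_sub (y : R) (H : ℕ) : ∑ e ∈ submasks H, y ^ (H - e) = (y + 1) ^ H := by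
  simp [sum_submasks_eq_sum_choose_mul, add_comm y, add_pow, mul_comm]

lemma dvd_sum_submasks_pow_sub_sum_submasks_pow (y : R) (H : ℕ) :
    (y + 1) ^ (H + 1) ∣ ∑ e ∈ submasks H, y ^ (H + 1 + e) - ∑ e ∈ submasks H, y ^ (H - e) := by
  have hsum : ∑ e ∈ submasks H, y ^ (H + 1 + e) = y ^ (H + 1) * (y + 1) ^ H := by
    simp only [pow_add y (H + 1), ← mul_sum, sum_submasks_pow]
  have hy : y + 1 ∣ y ^ (H + 1) - 1 := by
    simpa [CharTwo.sub_eq_add] using sub_one_dvd_pow_sub_one y (H + 1)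
  rw [hsum, sum_submasks_pow_sub, ← sub_one_mul, pow_succ']
  exact mul_dvd_mul hy dvd_rfl

lemma coeff_sum_submasks_reflect {s H i : ℕ} (L : ℕ) (hi : i < 2 ^ s * (H + 1)) :
    ∑ e ∈ submasks H, ((X + 1 : R[X]) ^ (2 ^ s * (H - e) + L)).coeff i =
      ∑ e ∈ submasks H, ((X + 1 : R[X]) ^ (2 ^ s * (H + 1 + e) + L)).coeff i := by
  set y : R[X] := (X + 1) ^ 2 ^ s
  have hy : y + 1 = X ^ 2 ^ s := by
    simp [y, add_pow_char_pow, add_assoc, CharTwo.add_self_eq_zero]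
  have hdvd : X ^ (2 ^ s * (H + 1)) ∣
      (X + 1) ^ L * (∑ e ∈ submasks H, y ^ (H + 1 + e) - ∑ e ∈ submasks H, y ^ (H - e)) := by
    rw [pow_mul, ← hy]
    exact dvd_mul_of_dvd_right (dvd_sum_submasks_pow_sub_sum_submasks_pow y H) _
  have key := X_pow_dvd_iff.mp hdvd i hi
  simp only [mul_sub, mul_sum, coeff_sub, finsetSum_coeff, sub_eq_zero, y, ← pow_mul, ← pow_add,
    add_comm L] at key
  exact key.symm

end CharTwo

lemma pre_two_pow_succ_mul_add_two_pow_iff {b e k : ℕ} :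
    Pre (2 ^ (b + 1) * e + 2 ^ b) k ↔ k.testBit b ∧ Pre e (k / 2 ^ (b + 1)) := by
  have hb : 2 ^ b < 2 ^ (b + 1) := Nat.pow_lt_pow_succ one_lt_two
  conv_lhs => rw [← Nat.div_add_mod k (2 ^ (b + 1))]
  rw [pre_two_pow_mul_add_iff _ (Nat.mod_lt _ (by positivity)), Nat.mul_add_mod,
    Nat.mod_eq_of_lt hb, Nat.mul_add_div (by positivity), Nat.div_eq_of_lt hb, add_zero,
    pre_two_pow_iff, Nat.testBit_mod_two_pow]
  simp

lemma mem_filter_pre_Aset_succ {k b ω : ℕ} :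
    ω ∈ (Aset k (b + 1)).filter (Pre · k) ↔
      ∃ e, Pre (2 ^ (b + 1) * e + 2 ^ b) k ∧ k - (2 ^ (b + 1) * e + 2 ^ b) = ω := by
  have hodd : ∀ e, (2 * e + 1) * 2 ^ b = 2 ^ (b + 1) * e + 2 ^ b := fun e => by ring
  simp only [Aset, Nat.add_one_ne_zero, if_false, add_tsub_cancel_right, mem_filter, mem_range,
    hodd]
  constructor
  · rintro ⟨⟨-, e, he⟩, hω⟩
    rw [Nat.dist_eq_sub_of_le hω.le] at he
    refine ⟨e, he ▸ hω.sub, ?_⟩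
    rw [← he, Nat.sub_sub_self hω.le]
  · rintro ⟨e, he, rfl⟩
    refine ⟨⟨(Nat.sub_le _ _).trans_lt (by omega), e, ?_⟩, he.sub⟩
    rw [Nat.dist_eq_sub_of_le (Nat.sub_le _ _), Nat.sub_sub_self he.le]

lemma filter_pre_Aset_succ_eq_empty {k b : ℕ} (hb : k.testBit b = false) :
    (Aset k (b + 1)).filter (Pre · k) = ∅ := by
  ext ω
  rw [mem_filter_pre_Aset_succ]
  simp [pre_two_pow_succ_mul_add_two_pow_iff, hb]

lemma filter_pre_Aset_succ_eq_image {k b : ℕ} (hb : k.testBit b) :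
    (Aset k (b + 1)).filter (Pre · k) =
      (submasks (k / 2 ^ (b + 1))).image fun e => k - (2 ^ (b + 1) * e + 2 ^ b) := by
  ext ω
  rw [mem_filter_pre_Aset_succ]
  simp [pre_two_pow_succ_mul_add_two_pow_iff, hb, mem_submasks]

lemma sum_submasks_eps_reflect {k b H r : ℕ} (hk : 2 ^ (b + 1) * H + r = k) (hr : 2 ^ b ≤ r)
    (hrM : r < 2 ^ (b + 1)) :
    ∑ e ∈ submasks H, eps k (k - (2 ^ (b + 1) * e + 2 ^ b)) =
      ∑ e ∈ submasks H, eps k (2 * k - (k - (2 ^ (b + 1) * e + 2 ^ b))) := by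
  have hM : 2 ^ (b + 1) = 2 * 2 ^ b := pow_succ' 2 b
  funext i
  simp only [Finset.sum_apply, eps_apply_eq_coeff]
  have hi : (i : ℕ) < 2 ^ (b + 1) * (H + 1) := by
    rw [mul_add_one]; omega
  refine (sum_congr rfl fun e he => ?_).trans
    ((coeff_sum_submasks_reflect (r - 2 ^ b) hi).trans (sum_congr rfl fun e he => ?_))
  all_goals
    have hle : 2 ^ (b + 1) * e ≤ 2 ^ (b + 1) * H := Nat.mul_le_mul_left _ (mem_submasks.mp he).le
    congr 2
  · have := Nat.mul_sub_left_distrib (2 ^ (b + 1)) H e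
    omega
  · have : 2 ^ (b + 1) * (H + 1 + e) = 2 ^ (b + 1) * H + 2 ^ (b + 1) + 2 ^ (b + 1) * e := by ring
    omega

theorem stmt18_general (k : ℕ) (n : ℕ) (hn : n = 2 * k)
    (m : ℕ) :
    ∀ p ≤ m + 1,
      ∑ j ∈ (Aset k p).filter (fun j => Pre j k), eps k j =
      ∑ j ∈ (Aset k p).filter (fun j => Pre j k), eps k (n - j) := by
  intro p _
  subst hn
  rcases p with _ | b
  · simp [Aset, filter_singleton, pre_refl, two_mul]
  cases hb : k.testBit b
  · simp [filter_pre_Aset_succ_eq_empty hb]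
  have hinj : Set.InjOn (fun e => k - (2 ^ (b + 1) * e + 2 ^ b)) (submasks (k / 2 ^ (b + 1))) := by
    intro x hx y hy hxy
    have hxk := (pre_two_pow_succ_mul_add_two_pow_iff.mpr ⟨hb, mem_submasks.mp hx⟩).le
    have hyk := (pre_two_pow_succ_mul_add_two_pow_iff.mpr ⟨hb, mem_submasks.mp hy⟩).le
    have : 2 ^ (b + 1) * x = 2 ^ (b + 1) * y := by simp only at hxy; omega
    exact Nat.eq_of_mul_eq_mul_left (by positivity) this
  have hr : 2 ^ b ≤ k % 2 ^ (b + 1) := (pre_two_pow_iff.mpr (by simpa using hb)).le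
  rw [filter_pre_Aset_succ_eq_image hb, sum_image hinj, sum_image hinj]
  exact sum_submasks_eps_reflect (Nat.div_add_mod k _) hr (Nat.mod_lt _ (by positivity))

theorem stmt18 (k : ℕ) (hk : 0 < k) (n : ℕ) (hn : n = 2 * k)
    (m : ℕ) (hm : m = Nat.log 2 k) :
    ∀ p ≤ m + 1,
      ∑ j ∈ (Aset k p).filter (fun j => Pre j k), eps k j =
      ∑ j ∈ (Aset k p).filter (fun j => Pre j k), eps k (n - j) :=
  stmt18_general k n hn m
end
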